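/- arXiv:1907.09970 — 4 statements merged into one kernel-verified Lean document; each statement's English description precedes it below -/
import Mathlib

section
/- Let u be continuous on [0, r*) and δ(r) = δ(0) + ∫_0^r u(s)/s ds with u(s) = s δ'(s), and define η(r) = 3 r^{-3} ∫_0^r δ(s) s² ds. Then |δ(r) − η(r)| ≤ (5r)^{-1/2} (∫_0^r u(s)² ds)^{1/2} for all r ∈ (0, r*). -/
/-!
Integrating `(δ(s) s³/3)' = δ(s) s² + u(s) s²/3` over `[0, r]` gives
`δ(r) − η(r) = r⁻³ ∫₀ʳ u(s) s² ds`; here the hypothesis `δ(r) = δ(0) + ∫₀ʳ u(s)/s ds` supplies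
the continuity of `δ` at `0` that the fundamental theorem of calculus needs. Cauchy–Schwarz
against `s²`, with `∫₀ʳ s⁴ ds = r⁵/5`, then bounds the right-hand side.
-/

open Set intervalIntegral Filter Topology MeasureTheory

theorem sq_integral_mul_le {α : Type*} [MeasurableSpace α] {μ : Measure α} {f g : α → ℝ}
    (hf : Integrable (fun x => f x ^ 2) μ) (hg : Integrable (fun x => g x ^ 2) μ)
    (hfg : Integrable (fun x => f x * g x) μ) :
    (∫ x, f x * g x ∂μ) ^ 2 ≤ (∫ x, f x ^ 2 ∂μ) * ∫ x, g x ^ 2 ∂μ := by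
  have hquad : ∀ t : ℝ,
      0 ≤ (∫ x, f x ^ 2 ∂μ) * (t * t) + 2 * (∫ x, f x * g x ∂μ) * t + ∫ x, g x ^ 2 ∂μ := by
    intro t
    calc 0 ≤ ∫ x, (t * f x + g x) ^ 2 ∂μ := integral_nonneg fun x => sq_nonneg _
      _ = ∫ x, (t * t) * f x ^ 2 + 2 * t * (f x * g x) + g x ^ 2 ∂μ := by
          congr 1; ext x; ring
      _ = _ := by
          have hfg' : Integrable (fun x => (t * t) * f x ^ 2 + 2 * t * (f x * g x)) μ :=
            (hf.const_mul _).add (hfg.const_mul _)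
          rw [integral_add hfg' hg, integral_add (hf.const_mul _) (hfg.const_mul _),
            MeasureTheory.integral_const_mul, MeasureTheory.integral_const_mul]
          ring
  have := discrim_le_zero hquad
  rw [discrim] at this
  nlinarith

theorem tendsto_primitive_nhdsGT {f : ℝ → ℝ} {a b : ℝ} (hab : a < b)
    (hf : ContinuousOn f (Ioo a b)) :
    Tendsto (fun x => ∫ s in a..x, f s) (𝓝[>] a) (𝓝 0) := by
  obtain ⟨c, hac, hcb⟩ := exists_between hab
  by_cases hint : IntervalIntegrable f volume a c
  · have hcont := continuousOn_primitive_interval' hint left_mem_uIcc a left_mem_uIcc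
    rw [uIcc_of_le hac.le] at hcont
    rw [← nhdsWithin_Ioo_eq_nhdsGT hac]
    simpa using hcont.tendsto.mono_left (nhdsWithin_mono _ Ioo_subset_Icc_self)
  · -- Then `f` is integrable on no `[a, x]`, so the primitive takes the junk value `0` near `a`.
    refine tendsto_const_nhds.congr' ?_
    filter_upwards [Ioo_mem_nhdsGT hac] with x hx
    refine (integral_undef fun hax => hint (hax.trans ?_)).symm
    refine (hf.mono ?_).intervalIntegrable
    rw [uIcc_of_le hx.2.le]
    exact Icc_subset_Ioo hx.1 hcb

theorem continuousOn_Ico_of_eq_add_integral {δ g : ℝ → ℝ} {a b : ℝ} (hab : a < b)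
    (hδ : ContinuousOn δ (Ioo a b)) (hg : ContinuousOn g (Ioo a b))
    (h : ∀ x ∈ Ioo a b, δ x = δ a + ∫ s in a..x, g s) : ContinuousOn δ (Ico a b) := by
  intro x hx
  rcases hx.1.eq_or_lt with rfl | hax
  · have hlim : Tendsto δ (𝓝[>] a) (𝓝 (δ a)) := by
      have hev : (fun x => δ a + ∫ s in a..x, g s) =ᶠ[𝓝[>] a] δ := by
        filter_upwards [Ioo_mem_nhdsGT hab] with y hy using (h y hy).symm
      simpa using ((tendsto_primitive_nhdsGT hab hg).const_add (δ a)).congr' hev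
    exact (continuousWithinAt_Ioi_iff_Ici.mp hlim).mono Ico_subset_Ici_self
  · exact (hδ.continuousAt (Ioo_mem_nhds hax hx.2)).continuousWithinAt

theorem sub_cubic_average_eq {δ u : ℝ → ℝ} {r : ℝ} (hr : 0 < r)
    (hδc : ContinuousOn δ (Icc 0 r)) (hu : ContinuousOn u (Icc 0 r))
    (hδ : ∀ x ∈ Ioo 0 r, HasDerivAt δ (u x / x) x) :
    δ r - 3 / r ^ 3 * ∫ s in (0:ℝ)..r, δ s * s ^ 2 = (∫ s in (0:ℝ)..r, u s * s ^ 2) / r ^ 3 := by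
  have hδs : IntervalIntegrable (fun s => δ s * s ^ 2) volume 0 r :=
    (hδc.mul (continuousOn_pow 2)).intervalIntegrable_of_Icc hr.le
  have hus : IntervalIntegrable (fun s => u s * s ^ 2 / 3) volume 0 r :=
    ((hu.mul (continuousOn_pow 2)).div_const 3).intervalIntegrable_of_Icc hr.le
  have hparts : ∫ s in (0:ℝ)..r, (δ s * s ^ 2 + u s * s ^ 2 / 3) = δ r * r ^ 3 / 3 := by
    have := integral_eq_sub_of_hasDerivAt_of_le hr.le
      ((hδc.mul (continuousOn_pow 3)).div_const 3) (fun x hx => ?_) (hδs.add hus)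
    · simpa using this
    · refine (((hδ x hx).mul (hasDerivAt_pow 3 x)).div_const 3).congr_deriv ?_
      field_simp [hx.1.ne']
      ring
  rw [integral_add hδs hus, intervalIntegral.integral_div] at hparts
  field_simp
  linarith

theorem abs_integral_mul_sq_div_cube_le {u : ℝ → ℝ} {r : ℝ} (hr : 0 < r)
    (hu : ContinuousOn u (Icc 0 r)) :
    |∫ s in (0:ℝ)..r, u s * s ^ 2| / r ^ 3 ≤ √(∫ s in (0:ℝ)..r, u s ^ 2) / √(5 * r) := by
  have hpow : ∫ s in (0:ℝ)..r, (s ^ 2) ^ 2 = r ^ 5 / 5 := by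
    simp_rw [← pow_mul]
    norm_num [integral_pow]
  have hcs : (∫ s in (0:ℝ)..r, u s * s ^ 2) ^ 2 ≤ (∫ s in (0:ℝ)..r, u s ^ 2) * (r ^ 5 / 5) := by
    rw [← hpow]
    simp only [integral_of_le hr.le]
    exact sq_integral_mul_le ((hu.pow 2).intervalIntegrable_of_Icc hr.le).1
      ((continuousOn_pow 2).pow 2 |>.intervalIntegrable_of_Icc hr.le).1
      ((hu.mul (continuousOn_pow 2)).intervalIntegrable_of_Icc hr.le).1
  rw [← Real.sqrt_div' _ (by positivity)]
  refine Real.le_sqrt_of_sq_le ?_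
  rw [div_pow, sq_abs, div_le_div_iff₀ (by positivity) (by positivity)]
  nlinarith [pow_pos hr 5]

/-- Cauchy–Schwarz estimate for the deviation of δ from its cubic average η. -/
theorem delta_minus_eta_estimate
    (rstar : ℝ) (hr : 0 < rstar) (u δ η : ℝ → ℝ)
    (hu : ContinuousOn u (Ico 0 rstar))
    (hδ : ∀ r ∈ Ioo 0 rstar, HasDerivAt δ (u r / r) r)
    (hδ' : ∀ r ∈ Ioo 0 rstar, δ r = δ 0 + ∫ s in (0:ℝ)..r, u s / s)
    (hη : ∀ r ∈ Ioo 0 rstar, η r = 3 / r ^ 3 * ∫ s in (0:ℝ)..r, δ s * s ^ 2) :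
    ∀ r ∈ Ioo 0 rstar,
      |δ r - η r| ≤ Real.sqrt (∫ s in (0:ℝ)..r, u s ^ 2) / Real.sqrt (5 * r) := by
  intro r hr'
  have hδc : ContinuousOn δ (Ico 0 rstar) :=
    continuousOn_Ico_of_eq_add_integral hr
      (fun x hx => (hδ x hx).continuousAt.continuousWithinAt)
      ((hu.mono Ioo_subset_Ico_self).div continuousOn_id fun x hx => hx.1.ne') hδ'
  have hIcc : Icc 0 r ⊆ Ico 0 rstar := Icc_subset_Ico_right hr'.2
  rw [hη r hr', sub_cubic_average_eq hr'.1 (hδc.mono hIcc) (hu.mono hIcc)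
      (fun x hx => hδ x ⟨hx.1, hx.2.trans hr'.2⟩), abs_div, abs_of_pos (pow_pos hr'.1 3)]
  exact abs_integral_mul_sq_div_cube_le hr'.1 (hu.mono hIcc)
end

section
/- If a continuous function u on [0, r*) satisfies u(0) = 0 and u(r) ≤ C(r² + (1/r)∫_0^r u(s)² ds) for all r ∈ (0, r*) with C > 0, then there exists r₀ > 0 and C' > 0 such that u(r) ≤ C' r² for all r ∈ [0, r₀). -/
/-!
Near the origin `u` is small by continuity, say `C u ≤ 1/2` on `[0, r]`. Let `M = u t` be the
maximum of `u` on `[0, r]`. Since `0 ≤ u ≤ M` there, the hypothesis at `t` gives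
`M ≤ C r² + C M² ≤ C r² + M / 2`, that is `M ≤ 2 C r²`.
-/

open Set Filter Topology intervalIntegral

theorem le_two_mul_of_le_add_mul_sq {M A C : ℝ} (hM : 0 ≤ M) (hCM : C * M ≤ 1 / 2)
    (h : M ≤ A + C * M ^ 2) : M ≤ 2 * A := by
  nlinarith [mul_le_mul_of_nonneg_right hCM hM]

theorem one_div_mul_integral_sq_le_sq {f : ℝ → ℝ} {s a : ℝ} (hs : 0 < s)
    (hf : ContinuousOn f (Icc 0 s)) (hf0 : ∀ t ∈ Icc 0 s, 0 ≤ f t)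
    (hfa : ∀ t ∈ Icc 0 s, f t ≤ a) :
    (1 / s) * ∫ t in (0 : ℝ)..s, f t ^ 2 ≤ a ^ 2 := by
  have hint : IntervalIntegrable (fun t => f t ^ 2) MeasureTheory.volume 0 s :=
    (hf.pow 2).intervalIntegrable_of_Icc hs.le
  have hle : ∫ t in (0 : ℝ)..s, f t ^ 2 ≤ ∫ _ in (0 : ℝ)..s, a ^ 2 :=
    integral_mono_on hs.le hint intervalIntegrable_const fun t ht =>
      pow_le_pow_left₀ (hf0 t ht) (hfa t ht) 2
  rw [integral_const, smul_eq_mul, sub_zero] at hle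
  rw [one_div_mul_eq_div, div_le_iff₀ hs]
  linarith

theorem le_two_mul_sq_of_le_integral_sq {u : ℝ → ℝ} {C r : ℝ} (hC : 0 ≤ C) (hr : 0 ≤ r)
    (hu : ContinuousOn u (Icc 0 r)) (hu0 : u 0 = 0) (hunn : ∀ s ∈ Icc 0 r, 0 ≤ u s)
    (hsmall : ∀ s ∈ Icc 0 r, C * u s ≤ 1 / 2)
    (hineq : ∀ s ∈ Ioc 0 r, u s ≤ C * (s ^ 2 + (1 / s) * ∫ t in (0 : ℝ)..s, u t ^ 2)) :
    ∀ s ∈ Icc 0 r, u s ≤ 2 * C * r ^ 2 := by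
  obtain ⟨t, ht, hmax⟩ := isCompact_Icc.exists_isMaxOn (nonempty_Icc.mpr hr) hu
  suffices u t ≤ 2 * (C * r ^ 2) from fun s hs => (hmax hs).trans (by linarith)
  rcases ht.1.eq_or_lt with rfl | ht0
  · rw [hu0]; positivity
  refine le_two_mul_of_le_add_mul_sq (hunn t ht) (hsmall t ht) ?_
  have hsub : Icc 0 t ⊆ Icc 0 r := Icc_subset_Icc_right ht.2
  have havg : (1 / t) * ∫ s in (0 : ℝ)..t, u s ^ 2 ≤ u t ^ 2 :=
    one_div_mul_integral_sq_le_sq ht0 (hu.mono hsub) (fun s hs => hunn s (hsub hs))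
      fun s hs => hmax (hsub hs)
  have hsq : t ^ 2 ≤ r ^ 2 := pow_le_pow_left₀ ht.1 ht.2 2
  calc u t ≤ C * (t ^ 2 + (1 / t) * ∫ s in (0 : ℝ)..t, u s ^ 2) := hineq t ⟨ht0, ht.2⟩
    _ ≤ C * (r ^ 2 + u t ^ 2) := by gcongr
    _ = C * r ^ 2 + C * u t ^ 2 := by ring

/-- Quadratic decay at the origin from the nonlinear integral inequality. -/
theorem quadratic_decay_at_origin
    (rstar : ℝ) (hr : 0 < rstar) (u : ℝ → ℝ) (C : ℝ) (hC : 0 < C)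
    (hu : ContinuousOn u (Ico 0 rstar))
    (hu0 : u 0 = 0)
    (hunn : ∀ r ∈ Ico 0 rstar, 0 ≤ u r)
    (hineq : ∀ r ∈ Ioo 0 rstar,
      u r ≤ C * (r ^ 2 + (1 / r) * ∫ s in (0:ℝ)..r, u s ^ 2)) :
    ∃ r₀ > 0, r₀ ≤ rstar ∧ ∃ C' > 0, ∀ r ∈ Ico 0 r₀, u r ≤ C' * r ^ 2 := by
  have hsmall : ∀ᶠ s in 𝓝[≥] 0, C * u s < 1 / 2 := by
    rw [← nhdsWithin_Ico_eq_nhdsGE hr]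
    refine (continuousWithinAt_const.mul (hu 0 ⟨le_rfl, hr⟩)).eventually (gt_mem_nhds ?_)
    norm_num [hu0]
  obtain ⟨δ, hδ, hδsmall⟩ := (mem_nhdsGE_iff_exists_Ico_subset).mp hsmall
  refine ⟨min δ rstar, lt_min hδ hr, min_le_right _ _, 2 * C, by positivity, ?_⟩
  rintro r ⟨hr0, hrlt⟩
  obtain ⟨hrδ, hrr⟩ := lt_min_iff.mp hrlt
  have hsub : Icc 0 r ⊆ Ico 0 rstar := Icc_subset_Ico_right hrr
  exact le_two_mul_sq_of_le_integral_sq hC.le hr0 (hu.mono hsub) hu0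
    (fun s hs => hunn s (hsub hs)) (fun s hs => (hδsmall (Icc_subset_Ico_right hrδ hs)).le)
    (fun s hs => hineq s ⟨hs.1, hs.2.trans_lt hrr⟩) r ⟨hr0, le_rfl⟩
end

section
/- For a hyperelastic material, with p̂_rad(δ,η) = δ² ∂_δ ŵ(δ,η) and p̂_tan(δ,η) = p̂_rad(δ,η) + (3/2)δη ∂_η ŵ(δ,η), define χ(δ) = p̂_tan(δ,δ) − p̂_rad(δ,δ) and p̂_iso(δ,η) = (1/3)(p̂_rad(δ,η) + 2 p̂_tan(δ,η)). Then (3/2)∂_η p̂_iso(δ,δ) = χ'(δ) − χ(δ)/δ for all δ > 0. -/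
open Set

/-- Radial pressure of a hyperelastic material: p̂_rad(δ,η) = δ² ∂_δ ŵ(δ,η). -/
noncomputable def pradH (w : ℝ → ℝ → ℝ) (δ η : ℝ) : ℝ :=
  δ ^ 2 * deriv (fun d => w d η) δ

/-- Tangential pressure: p̂_tan = p̂_rad + (3/2) δ η ∂_η ŵ. -/
noncomputable def ptanH (w : ℝ → ℝ → ℝ) (δ η : ℝ) : ℝ :=
  pradH w δ η + (3 / 2) * δ * η * deriv (fun e => w δ e) η

/-- Isotropic pressure: p̂_iso = (1/3)(p̂_rad + 2 p̂_tan). -/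
noncomputable def pisoH (w : ℝ → ℝ → ℝ) (δ η : ℝ) : ℝ :=
  (1 / 3) * (pradH w δ η + 2 * ptanH w δ η)

/-- Pressure anisotropy on the diagonal: χ(δ) = p̂_tan(δ,δ) − p̂_rad(δ,δ). -/
noncomputable def chiH (w : ℝ → ℝ → ℝ) (δ : ℝ) : ℝ :=
  ptanH w δ δ - pradH w δ δ

/-!
Unfolding the definitions, `p̂_iso = δ² ∂_δ ŵ + δ η ∂_η ŵ` and `χ(δ) = (3/2) δ² ∂_η ŵ(δ, δ)`.
Since the derivative of `∂_η ŵ` along the diagonal is `∂_δ ∂_η ŵ + ∂_η ∂_η ŵ`, both sides equal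
`(3/2) δ ∂_η ŵ + (3/2) δ² (∂_η ∂_δ ŵ + ∂_η ∂_η ŵ)` once the mixed partials are identified
(Schwarz, as `ŵ` is `C²`).
-/

open Function

section Partials

variable {E : Type*} [NormedAddCommGroup E] [NormedSpace ℝ E] {w : ℝ → ℝ → E}

theorem hasDerivAt_left_of_differentiableAt_uncurry {a b : ℝ}
    (h : DifferentiableAt ℝ (uncurry w) (a, b)) :
    HasDerivAt (fun x => w x b) (fderiv ℝ (uncurry w) (a, b) (1, 0)) a :=
  h.hasFDerivAt.comp_hasDerivAt (f := fun x : ℝ => (x, b)) a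
    ((hasDerivAt_id a).prodMk (hasDerivAt_const a b))

theorem hasDerivAt_right_of_differentiableAt_uncurry {a b : ℝ}
    (h : DifferentiableAt ℝ (uncurry w) (a, b)) :
    HasDerivAt (fun y => w a y) (fderiv ℝ (uncurry w) (a, b) (0, 1)) b :=
  h.hasFDerivAt.comp_hasDerivAt (f := fun y : ℝ => (a, y)) b
    ((hasDerivAt_const b a).prodMk (hasDerivAt_id b))

theorem hasFDerivAt_fderiv_apply {F : ℝ × ℝ → E} {p : ℝ × ℝ} (h : ContDiffAt ℝ 2 F p)
    (v : ℝ × ℝ) :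
    HasFDerivAt (fun q => fderiv ℝ F q v) ((fderiv ℝ (fderiv ℝ F) p).flip v) p := by
  have hD : HasFDerivAt (fderiv ℝ F) (fderiv ℝ (fderiv ℝ F) p) p :=
    ((h.fderiv_right (m := 1) le_rfl).differentiableAt one_ne_zero).hasFDerivAt
  exact (ContinuousLinearMap.apply ℝ E v).hasFDerivAt.comp p hD

theorem hasFDerivAt_deriv_left_uncurry {p : ℝ × ℝ} (h : ContDiffAt ℝ 2 (uncurry w) p) :
    HasFDerivAt (fun q : ℝ × ℝ => deriv (fun x => w x q.2) q.1)
      ((fderiv ℝ (fderiv ℝ (uncurry w)) p).flip (1, 0)) p := by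
  refine (hasFDerivAt_fderiv_apply h (1, 0)).congr_of_eventuallyEq ?_
  filter_upwards [h.eventually (by simp)] with q hq
  exact (hasDerivAt_left_of_differentiableAt_uncurry (hq.differentiableAt two_ne_zero)).deriv

theorem hasFDerivAt_deriv_right_uncurry {p : ℝ × ℝ} (h : ContDiffAt ℝ 2 (uncurry w) p) :
    HasFDerivAt (fun q : ℝ × ℝ => deriv (fun y => w q.1 y) q.2)
      ((fderiv ℝ (fderiv ℝ (uncurry w)) p).flip (0, 1)) p := by
  refine (hasFDerivAt_fderiv_apply h (0, 1)).congr_of_eventuallyEq ?_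
  filter_upwards [h.eventually (by simp)] with q hq
  exact (hasDerivAt_right_of_differentiableAt_uncurry (hq.differentiableAt two_ne_zero)).deriv

end Partials

theorem pisoH_eq (w : ℝ → ℝ → ℝ) (δ η : ℝ) :
    pisoH w δ η = δ ^ 2 * deriv (fun d => w d η) δ + δ * η * deriv (fun e => w δ e) η := by
  simp only [pisoH, ptanH, pradH]
  ring

theorem chiH_eq (w : ℝ → ℝ → ℝ) (δ : ℝ) :
    chiH w δ = 3 / 2 * δ ^ 2 * deriv (fun e => w δ e) δ := by
  simp only [chiH, ptanH, pradH]
  ring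

/-- For hyperelastic materials, (3/2)∂_η p̂_iso(δ,δ) = χ'(δ) − χ(δ)/δ. -/
theorem hyperelastic_iso_pressure_identity
    (w : ℝ → ℝ → ℝ)
    (hw : ContDiffOn ℝ 3 (fun p : ℝ × ℝ => w p.1 p.2) (Ioi 0 ×ˢ Ioi 0)) :
    ∀ δ > (0 : ℝ),
      (3 / 2) * deriv (fun e => pisoH w δ e) δ =
        deriv (chiH w) δ - chiH w δ / δ := by
  intro δ hδ
  have hC2 : ContDiffAt ℝ 2 (uncurry w) (δ, δ) :=
    (hw.contDiffAt (prod_mem_nhds (Ioi_mem_nhds hδ) (Ioi_mem_nhds hδ))).of_le (by norm_num)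
  set D := fderiv ℝ (fderiv ℝ (uncurry w)) (δ, δ)
  have hvert : HasDerivAt (fun e : ℝ => (δ, e)) ((0 : ℝ), (1 : ℝ)) δ :=
    (hasDerivAt_const δ δ).prodMk (hasDerivAt_id δ)
  have hdiag : HasDerivAt (fun d : ℝ => (d, d)) ((1 : ℝ), (1 : ℝ)) δ :=
    (hasDerivAt_id δ).prodMk (hasDerivAt_id δ)
  have hw₁₂ : HasDerivAt (fun e => deriv (fun x => w x e) δ) (D (0, 1) (1, 0)) δ :=
    (hasFDerivAt_deriv_left_uncurry hC2).comp_hasDerivAt (f := fun e : ℝ => (δ, e)) δ hvert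
  have hw₂₂ : HasDerivAt (fun e => deriv (fun y => w δ y) e) (D (0, 1) (0, 1)) δ :=
    (hasFDerivAt_deriv_right_uncurry hC2).comp_hasDerivAt (f := fun e : ℝ => (δ, e)) δ hvert
  have hw₂_diag : HasDerivAt (fun d => deriv (fun y => w d y) d) (D (1, 1) (0, 1)) δ :=
    (hasFDerivAt_deriv_right_uncurry hC2).comp_hasDerivAt (f := fun d : ℝ => (d, d)) δ hdiag
  have hiso : HasDerivAt (fun e => pisoH w δ e)
      (δ ^ 2 * D (0, 1) (1, 0) + δ * deriv (fun y => w δ y) δ + δ ^ 2 * D (0, 1) (0, 1)) δ := by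
    simp only [pisoH_eq]
    refine ((hw₁₂.const_mul (δ ^ 2)).add (((hasDerivAt_id' δ).const_mul δ).mul hw₂₂)).congr_deriv ?_
    ring
  have hchi : HasDerivAt (chiH w)
      (3 * δ * deriv (fun y => w δ y) δ + 3 / 2 * δ ^ 2 * D (1, 1) (0, 1)) δ := by
    rw [funext (chiH_eq w)]
    refine (((hasDerivAt_pow 2 δ).const_mul (3 / 2 : ℝ)).mul hw₂_diag).congr_deriv ?_
    ring
  have hsymm : D (0, 1) (1, 0) = D (1, 0) (0, 1) := hC2.isSymmSndFDerivAt (by simp) _ _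
  have hsplit : ((1 : ℝ), (1 : ℝ)) = ((1 : ℝ), (0 : ℝ)) + ((0 : ℝ), (1 : ℝ)) := by simp
  rw [hiso.deriv, hchi.deriv, chiH_eq, hsplit, map_add, add_apply, ← hsymm]
  field_simp
  ring
end

section
/- For the Seth self-similar solution, the radial pressure p_rad^⋆(r) = −p₀ + ((9λ+2μ)/8) d^{1/2}/r, with p₀ = (3λ+2μ)/2 and d = 3(9λ+14μ)/(16πK²), is positive for 0 < r < R, zero at r = R, and negative for r > R, where R = (9λ+2μ)√(27λ+42μ)/(√π K (48λ+32μ)); moreover p_tan^⋆(r) = −p₀ + ((9λ+8μ)/8) d^{1/2}/r > p_rad^⋆(r) for all r > 0, assuming λ, μ > 0 and K > 0. -/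
/-!
Since `√d = √(27λ + 42μ) / (4 √π K)`, the radial pressure has the shape `-p₀ + c / r` with
`p₀ = (3λ + 2μ)/2 > 0` and `c = ((9λ + 2μ)/8) √d > 0`, and the stated `R` is exactly `c / p₀`.
A law `-a + c / r` with `a, c > 0` is positive before `c / a`, vanishes there and is negative
after it. The tangential pressure differs only by the larger coefficient `9λ + 8μ` of `√d / r`.
-/

open Real

section InverseLaw

variable {a c r : ℝ}

theorem neg_add_div_pos_of_lt_div (ha : 0 < a) (hr : 0 < r) (h : r < c / a) :
    0 < -a + c / r := by
  have hac : a * r < c := by rwa [lt_div_iff₀ ha, mul_comm] at h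
  have : a < c / r := by rwa [lt_div_iff₀ hr]
  linarith

theorem neg_add_div_div_eq_zero (hc : c ≠ 0) : -a + c / (c / a) = 0 := by
  rw [div_div_cancel₀ hc, neg_add_cancel]

theorem neg_add_div_neg_of_div_lt (ha : 0 < a) (hc : 0 ≤ c) (h : c / a < r) :
    -a + c / r < 0 := by
  have hr : 0 < r := (div_nonneg hc ha.le).trans_lt h
  have hcr : c < r * a := (div_lt_iff₀ ha).1 h
  have : c / r < a := by rwa [div_lt_iff₀ hr, mul_comm]
  linarith

end InverseLaw

theorem sqrt_seth_d (lam mu : ℝ) {K : ℝ} (hK : 0 ≤ K) :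
    √(3 * (9 * lam + 14 * mu) / (16 * π * K ^ 2)) = √(27 * lam + 42 * mu) / (4 * √π * K) := by
  rw [show 3 * (9 * lam + 14 * mu) = 27 * lam + 42 * mu by ring, sqrt_div' _ (by positivity),
    show 16 * π * K ^ 2 = (4 * K) ^ 2 * π by ring,
    sqrt_mul' _ pi_pos.le, sqrt_sq (by positivity)]
  ring

theorem seth_root_eq (lam mu : ℝ) {K : ℝ} (hK : 0 ≤ K) :
    (9 * lam + 2 * mu) / 8 * √(3 * (9 * lam + 14 * mu) / (16 * π * K ^ 2))
        / ((3 * lam + 2 * mu) / 2)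
      = (9 * lam + 2 * mu) * √(27 * lam + 42 * mu) / (√π * K * (48 * lam + 32 * mu)) := by
  rw [sqrt_seth_d lam mu hK, show 48 * lam + 32 * mu = 16 * (3 * lam + 2 * mu) by ring]
  -- `ring` would otherwise expand the sum inside the inverse and lose the cancellation
  generalize 3 * lam + 2 * mu = s
  ring

/-- Sign properties of the principal pressures along the Seth self-similar
    solution. -/
theorem seth_self_similar_pressures (lam mu K : ℝ)
    (hlam : 0 < lam) (hmu : 0 < mu) (hK : 0 < K)
    (d : ℝ) (hdval : d = 3 * (9 * lam + 14 * mu) / (16 * π * K ^ 2))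
    (prad ptan : ℝ → ℝ)
    (hprad : prad = fun r =>
      -(3 * lam + 2 * mu) / 2 + ((9 * lam + 2 * mu) / 8) * Real.sqrt d / r)
    (hptan : ptan = fun r =>
      -(3 * lam + 2 * mu) / 2 + ((9 * lam + 8 * mu) / 8) * Real.sqrt d / r)
    (R : ℝ) (hR : R = (9 * lam + 2 * mu) * Real.sqrt (27 * lam + 42 * mu)
        / (Real.sqrt π * K * (48 * lam + 32 * mu))) :
    (∀ r : ℝ, 0 < r → r < R → 0 < prad r) ∧
    prad R = 0 ∧
    (∀ r : ℝ, R < r → prad r < 0) ∧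
    (∀ r > (0 : ℝ), prad r < ptan r) := by
  have hd : 0 < √d := by rw [hdval]; positivity
  have ha : 0 < (3 * lam + 2 * mu) / 2 := by positivity
  have hc : 0 < (9 * lam + 2 * mu) / 8 * √d := by positivity
  have hR_root : R = (9 * lam + 2 * mu) / 8 * √d / ((3 * lam + 2 * mu) / 2) := by
    rw [hR, hdval, seth_root_eq lam mu hK.le]
  subst hprad hptan hR_root
  simp only [neg_div]
  refine ⟨fun r hr hrR => neg_add_div_pos_of_lt_div ha hr hrR, neg_add_div_div_eq_zero hc.ne',
    fun r hrR => neg_add_div_neg_of_div_lt ha hc.le hrR, fun r hr => ?_⟩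
  gcongr
  linarith
end
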